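/- arXiv:1907.07447 — 2 statements merged into one kernel-verified Lean document; each statement's English description precedes it below -/
import Mathlib

section
/- Under the stated hypotheses, for every n ≥ 0 one has the identity ⟨v'(·)P(·,n), P(·,n)⟩ ℋ(n)⁻¹ = A + ℋ(n) A* ℋ(n)⁻¹, i.e. the zeroth coefficient of the difference operator v'(L) applied to the monic MVOPs equals A + ℋ(n)A*ℋ(n)⁻¹. -/
/-!
Apply the adjointness relation to `R = S = P(·,n)`. Since `P(·,n) 𝒟 = P' + P A` is a matrix
polynomial of degree `n` with leading coefficient `A`, and `P(·,n)` is orthogonal to every matrix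
polynomial of lower degree (these are left combinations of `P(·,0), …, P(·,n-1)`), one gets
`⟨P 𝒟, P⟩ = A ℋ(n)`, and by the Hermitian symmetry of the inner product `⟨P, P 𝒟⟩ = ℋ(n) A*`.
The adjointness relation then reads `A ℋ(n) = ⟨v' P, P⟩ - ℋ(n) A*`; multiply by `ℋ(n)⁻¹`.
-/

open MeasureTheory Matrix Finset
open scoped ComplexOrder

/-- Entrywise integral of a matrix-valued function on `ℝ`. -/
noncomputable def matInt (N : ℕ) (F : ℝ → Matrix (Fin N) (Fin N) ℂ) :
    Matrix (Fin N) (Fin N) ℂ :=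
  Matrix.of fun i j => ∫ y : ℝ, F y i j

/-- Entrywise derivative of a matrix-valued function on `ℝ`. -/
noncomputable def matDeriv (N : ℕ) (F : ℝ → Matrix (Fin N) (Fin N) ℂ) (x : ℝ) :
    Matrix (Fin N) (Fin N) ℂ :=
  Matrix.of fun i j => deriv (fun y => F y i j) x

/-- `F` is (the evaluation of) a matrix polynomial. -/
def IsMatPoly (N : ℕ) (F : ℝ → Matrix (Fin N) (Fin N) ℂ) : Prop :=
  ∃ (d : ℕ) (c : ℕ → Matrix (Fin N) (Fin N) ℂ),
    ∀ x : ℝ, F x = ∑ k ∈ Finset.range (d + 1), ((x : ℂ) ^ k) • c k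

/-- `F` is a matrix polynomial of degree `n` with leading coefficient the identity. -/
def IsMonicMatPoly (N n : ℕ) (F : ℝ → Matrix (Fin N) (Fin N) ℂ) : Prop :=
  ∃ c : ℕ → Matrix (Fin N) (Fin N) ℂ, c n = 1 ∧
    ∀ x : ℝ, F x = ∑ k ∈ Finset.range (n + 1), ((x : ℂ) ^ k) • c k

/-- The matrix-valued inner product `⟨H, G⟩ = ∫ H(y) W(y) G(y)* dy`. -/
noncomputable def matIP (N : ℕ) (W H G : ℝ → Matrix (Fin N) (Fin N) ℂ) :
    Matrix (Fin N) (Fin N) ℂ :=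
  matInt N fun y => H y * W y * (G y)ᴴ

/-- The coefficient `⟨v'(·)P(·,n), P(·,m)⟩ ℋ(m)⁻¹`. -/
noncomputable def vCoef (N : ℕ) (W : ℝ → Matrix (Fin N) (Fin N) ℂ) (v : Polynomial ℝ)
    (P : ℕ → ℝ → Matrix (Fin N) (Fin N) ℂ) (n m : ℕ) : Matrix (Fin N) (Fin N) ℂ :=
  matIP N W (fun y => ((v.derivative.eval y : ℝ) : ℂ) • P n y) (P m) *
    (matIP N W (P m) (P m))⁻¹

variable {N : ℕ}

noncomputable def matPolyEval (d : ℕ) (c : ℕ → Matrix (Fin N) (Fin N) ℂ) (x : ℝ) :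
    Matrix (Fin N) (Fin N) ℂ :=
  ∑ k ∈ range (d + 1), ((x : ℂ) ^ k) • c k

theorem isMatPoly_matPolyEval (d : ℕ) (c : ℕ → Matrix (Fin N) (Fin N) ℂ) :
    IsMatPoly N (matPolyEval d c) :=
  ⟨d, c, fun _ => rfl⟩

theorem IsMonicMatPoly.exists_eq_matPolyEval {n : ℕ} {F : ℝ → Matrix (Fin N) (Fin N) ℂ}
    (hF : IsMonicMatPoly N n F) : ∃ c, c n = 1 ∧ F = matPolyEval n c := by
  obtain ⟨c, hc, hF⟩ := hF
  exact ⟨c, hc, funext hF⟩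

theorem IsMonicMatPoly.isMatPoly {n : ℕ} {F : ℝ → Matrix (Fin N) (Fin N) ℂ}
    (hF : IsMonicMatPoly N n F) : IsMatPoly N F :=
  let ⟨c, _, hc⟩ := hF
  ⟨n, c, hc⟩

theorem mul_matPolyEval (C : Matrix (Fin N) (Fin N) ℂ) (d : ℕ)
    (c : ℕ → Matrix (Fin N) (Fin N) ℂ) (x : ℝ) :
    C * matPolyEval d c x = matPolyEval d (fun k => C * c k) x := by
  simp only [matPolyEval, mul_sum, mul_smul_comm]

theorem matPolyEval_mul (d : ℕ) (c : ℕ → Matrix (Fin N) (Fin N) ℂ)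
    (C : Matrix (Fin N) (Fin N) ℂ) (x : ℝ) :
    matPolyEval d c x * C = matPolyEval d (fun k => c k * C) x := by
  simp only [matPolyEval, sum_mul, smul_mul_assoc]

theorem IsMatPoly.const_mul {F : ℝ → Matrix (Fin N) (Fin N) ℂ} (hF : IsMatPoly N F)
    (C : Matrix (Fin N) (Fin N) ℂ) : IsMatPoly N fun y => C * F y := by
  obtain ⟨d, c, hc⟩ := hF
  exact ⟨d, fun k => C * c k, fun y =>
    (congrArg (C * ·) (hc y)).trans (mul_matPolyEval C d c y)⟩

theorem matPolyEval_zero (c : ℕ → Matrix (Fin N) (Fin N) ℂ) (x : ℝ) :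
    matPolyEval 0 c x = c 0 := by
  simp [matPolyEval]

theorem matPolyEval_add (d : ℕ) (c e : ℕ → Matrix (Fin N) (Fin N) ℂ) (x : ℝ) :
    matPolyEval d (c + e) x = matPolyEval d c x + matPolyEval d e x := by
  simp only [matPolyEval, Pi.add_apply, smul_add, sum_add_distrib]

theorem matPolyEval_succ_of_eq_zero {d : ℕ} {c : ℕ → Matrix (Fin N) (Fin N) ℂ}
    (hc : c (d + 1) = 0) (x : ℝ) : matPolyEval (d + 1) c x = matPolyEval d c x := by
  rw [matPolyEval, sum_range_succ, hc, smul_zero, add_zero, matPolyEval]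

theorem matPolyEval_succ_eq_mul_add {d : ℕ} {c p : ℕ → Matrix (Fin N) (Fin N) ℂ}
    (hp : p (d + 1) = 1) (x : ℝ) :
    matPolyEval (d + 1) c x = c (d + 1) * matPolyEval (d + 1) p x +
      matPolyEval d (fun k => c k - c (d + 1) * p k) x := by
  rw [← matPolyEval_succ_of_eq_zero (c := fun k => c k - c (d + 1) * p k) (by simp [hp]),
    mul_matPolyEval, ← matPolyEval_add]
  congr 1
  funext k
  simp

theorem matDeriv_matPolyEval (d : ℕ) (c : ℕ → Matrix (Fin N) (Fin N) ℂ) :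
    ∃ c' : ℕ → Matrix (Fin N) (Fin N) ℂ, c' d = 0 ∧
      matDeriv N (matPolyEval d c) = matPolyEval d c' := by
  refine ⟨fun k => if k < d then ((k : ℂ) + 1) • c (k + 1) else 0, by simp, ?_⟩
  funext y
  ext i j
  have hd : HasDerivAt (fun x : ℝ => ∑ k ∈ range (d + 1), (x : ℂ) ^ k * c k i j)
      (∑ k ∈ range (d + 1), (k : ℂ) * (y : ℂ) ^ (k - 1) * c k i j) y :=
    HasDerivAt.fun_sum fun k _ =>
      ((hasDerivAt_pow k ((y : ℝ) : ℂ)).mul_const (c k i j)).comp_ofReal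
  have hentry : ∀ (e : ℕ → Matrix (Fin N) (Fin N) ℂ) (x : ℝ),
      matPolyEval d e x i j = ∑ k ∈ range (d + 1), (x : ℂ) ^ k * e k i j := fun e x => by
    simp [matPolyEval, Matrix.sum_apply]
  simp only [matDeriv, of_apply, hentry, hd.deriv]
  rw [sum_range_succ', sum_range_succ, if_neg (lt_irrefl d)]
  simp only [CharP.cast_eq_zero, zero_mul, add_zero, Matrix.zero_apply, mul_zero,
    Nat.add_sub_cancel]
  refine sum_congr rfl fun k hk => ?_
  rw [if_pos (mem_range.mp hk), Matrix.smul_apply, smul_eq_mul]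
  push_cast
  ring

theorem IsMonicMatPoly.exists_matDeriv_add_mul_eq {n : ℕ} {F : ℝ → Matrix (Fin N) (Fin N) ℂ}
    (hF : IsMonicMatPoly N n F) (A : Matrix (Fin N) (Fin N) ℂ) :
    ∃ q : ℕ → Matrix (Fin N) (Fin N) ℂ, q n = A ∧
      ∀ y, matDeriv N F y + F y * A = matPolyEval n q y := by
  obtain ⟨c, hc, rfl⟩ := hF.exists_eq_matPolyEval
  obtain ⟨c', hc', hderiv⟩ := matDeriv_matPolyEval n c
  refine ⟨fun k => c' k + c k * A, by simp [hc', hc], fun y => ?_⟩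
  rw [hderiv, matPolyEval_mul, ← matPolyEval_add]
  rfl

section Integrability

variable {W : ℝ → Matrix (Fin N) (Fin N) ℂ}

theorem integrable_ofReal_pow_mul_apply (hWmeas : ∀ i j : Fin N, Measurable fun x => W x i j)
    (hWmom : ∀ (m : ℕ) (i j : Fin N), Integrable fun x : ℝ => |x| ^ m * ‖W x i j‖)
    (m : ℕ) (a b : Fin N) : Integrable fun y : ℝ => (y : ℂ) ^ m * W y a b := by
  refine (hWmom m a b).mono' ?_ (Filter.Eventually.of_forall fun y => ?_)
  · exact ((Complex.measurable_ofReal.pow_const m).mul (hWmeas a b)).aestronglyMeasurable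
  · simp

theorem integrable_polynomial_smul_mul_mul_conjTranspose_apply
    (hWmeas : ∀ i j : Fin N, Measurable fun x => W x i j)
    (hWmom : ∀ (m : ℕ) (i j : Fin N), Integrable fun x : ℝ => |x| ^ m * ‖W x i j‖)
    (p : Polynomial ℝ) {F G : ℝ → Matrix (Fin N) (Fin N) ℂ}
    (hF : IsMatPoly N F) (hG : IsMatPoly N G) (i j : Fin N) :
    Integrable fun y => ((((p.eval y : ℝ) : ℂ) • F y) * W y * (G y)ᴴ) i j := by
  obtain ⟨d₁, c, hc⟩ := hF
  obtain ⟨d₂, e, he⟩ := hG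
  have hexpand : ∀ y : ℝ, ((((p.eval y : ℝ) : ℂ) • F y) * W y * (G y)ᴴ) i j =
      ∑ k ∈ range (d₁ + 1), ∑ b, ∑ l ∈ range (d₂ + 1), ∑ a, ∑ m ∈ range (p.natDegree + 1),
        (p.coeff m * c k i a * star (e l j b)) * ((y : ℂ) ^ (m + k + l) * W y a b) := by
    intro y
    rw [hc y, he y, smul_mul_assoc, smul_mul_assoc, Polynomial.eval_eq_sum_range]
    simp only [Matrix.smul_apply, smul_eq_mul, Matrix.mul_apply, conjTranspose_apply,
      Matrix.sum_apply, sum_mul, mul_sum, star_sum, star_mul']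
    simp only [Complex.ofReal_sum, Complex.ofReal_mul, Complex.ofReal_pow, Complex.star_def,
      map_pow, Complex.conj_ofReal, sum_mul]
    refine sum_congr rfl fun k _ => sum_congr rfl fun b _ => sum_congr rfl fun l _ =>
      sum_congr rfl fun a _ => sum_congr rfl fun m _ => ?_
    ring
  simp only [hexpand]
  refine integrable_finsetSum _ fun k _ => integrable_finsetSum _ fun b _ =>
    integrable_finsetSum _ fun l _ => integrable_finsetSum _ fun a _ =>
      integrable_finsetSum _ fun m _ =>
        (integrable_ofReal_pow_mul_apply hWmeas hWmom _ a b).const_mul _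

end Integrability

theorem matInt_add {F G : ℝ → Matrix (Fin N) (Fin N) ℂ}
    (hF : ∀ i j, Integrable fun y => F y i j) (hG : ∀ i j, Integrable fun y => G y i j) :
    matInt N (fun y => F y + G y) = matInt N F + matInt N G := by
  ext i j
  exact integral_add (hF i j) (hG i j)

theorem matInt_sub {F G : ℝ → Matrix (Fin N) (Fin N) ℂ}
    (hF : ∀ i j, Integrable fun y => F y i j) (hG : ∀ i j, Integrable fun y => G y i j) :
    matInt N (fun y => F y - G y) = matInt N F - matInt N G := by
  ext i j
  exact integral_sub (hF i j) (hG i j)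

theorem matInt_mul_left (C : Matrix (Fin N) (Fin N) ℂ) {F : ℝ → Matrix (Fin N) (Fin N) ℂ}
    (hF : ∀ i j, Integrable fun y => F y i j) :
    matInt N (fun y => C * F y) = C * matInt N F := by
  ext i j
  simp only [matInt, of_apply, mul_apply]
  rw [integral_finsetSum _ fun a _ => (hF a j).const_mul _]
  exact sum_congr rfl fun a _ => integral_const_mul _ _

theorem conjTranspose_matIP {W : ℝ → Matrix (Fin N) (Fin N) ℂ}
    (hW : ∀ᵐ y, (W y).IsHermitian) (F G : ℝ → Matrix (Fin N) (Fin N) ℂ) :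
    (matIP N W F G)ᴴ = matIP N W G F := by
  ext i j
  simp only [matIP, matInt, conjTranspose_apply, of_apply]
  rw [Complex.star_def, ← integral_conj]
  refine integral_congr_ae ?_
  filter_upwards [hW] with y hy
  rw [← Complex.star_def, ← conjTranspose_apply, conjTranspose_mul, conjTranspose_mul,
    conjTranspose_conjTranspose, hy.eq, Matrix.mul_assoc]

theorem mul_mul_conjTranspose_ofReal_smul (F W G : Matrix (Fin N) (Fin N) ℂ) (r : ℝ) :
    F * W * ((r : ℂ) • G)ᴴ = ((r : ℂ) • F) * W * Gᴴ := by
  rw [conjTranspose_smul, Complex.star_def, Complex.conj_ofReal, mul_smul_comm, smul_mul_assoc,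
    smul_mul_assoc]

section MatrixWeight

variable {W : ℝ → Matrix (Fin N) (Fin N) ℂ}
  (hWmeas : ∀ i j : Fin N, Measurable fun x => W x i j)
  (hWmom : ∀ (m : ℕ) (i j : Fin N), Integrable fun x : ℝ => |x| ^ m * ‖W x i j‖)
include hWmeas hWmom

theorem integrable_mul_mul_conjTranspose_apply {F G : ℝ → Matrix (Fin N) (Fin N) ℂ}
    (hF : IsMatPoly N F) (hG : IsMatPoly N G) (i j : Fin N) :
    Integrable fun y => (F y * W y * (G y)ᴴ) i j := by
  simpa using integrable_polynomial_smul_mul_mul_conjTranspose_apply hWmeas hWmom 1 hF hG i j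

theorem matIP_mul_left (C : Matrix (Fin N) (Fin N) ℂ) {F G : ℝ → Matrix (Fin N) (Fin N) ℂ}
    (hF : IsMatPoly N F) (hG : IsMatPoly N G) :
    matIP N W (fun y => C * F y) G = C * matIP N W F G := by
  simp only [matIP, Matrix.mul_assoc]
  refine matInt_mul_left C ?_
  simpa only [Matrix.mul_assoc] using integrable_mul_mul_conjTranspose_apply hWmeas hWmom hF hG

theorem matIP_add_left {F₁ F₂ G : ℝ → Matrix (Fin N) (Fin N) ℂ}
    (hF₁ : IsMatPoly N F₁) (hF₂ : IsMatPoly N F₂) (hG : IsMatPoly N G) :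
    matIP N W (fun y => F₁ y + F₂ y) G = matIP N W F₁ G + matIP N W F₂ G := by
  simp only [matIP, Matrix.add_mul]
  exact matInt_add (integrable_mul_mul_conjTranspose_apply hWmeas hWmom hF₁ hG)
    (integrable_mul_mul_conjTranspose_apply hWmeas hWmom hF₂ hG)

theorem matIP_polynomial_smul_sub_right (p : Polynomial ℝ)
    {F G Q : ℝ → Matrix (Fin N) (Fin N) ℂ}
    (hF : IsMatPoly N F) (hG : IsMatPoly N G) (hQ : IsMatPoly N Q) :
    matIP N W F (fun y => ((p.eval y : ℝ) : ℂ) • G y - Q y) =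
      matIP N W (fun y => ((p.eval y : ℝ) : ℂ) • F y) G - matIP N W F Q := by
  simp only [matIP, conjTranspose_sub, Matrix.mul_sub, mul_mul_conjTranspose_ofReal_smul]
  exact matInt_sub
    (integrable_polynomial_smul_mul_mul_conjTranspose_apply hWmeas hWmom p hF hG)
    (integrable_mul_mul_conjTranspose_apply hWmeas hWmom hF hQ)

variable {P : ℕ → ℝ → Matrix (Fin N) (Fin N) ℂ} (hP : ∀ n, IsMonicMatPoly N n (P n))
include hP

theorem matIP_matPolyEval_zero_left (c : ℕ → Matrix (Fin N) (Fin N) ℂ) (n : ℕ) :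
    matIP N W (matPolyEval 0 c) (P n) = c 0 * matIP N W (P 0) (P n) := by
  obtain ⟨p, hp, hP0⟩ := (hP 0).exists_eq_matPolyEval
  have hc : matPolyEval 0 c = fun y => c 0 * P 0 y := by
    funext y
    rw [hP0, matPolyEval_zero, matPolyEval_zero, hp, Matrix.mul_one]
  rw [hc, matIP_mul_left hWmeas hWmom _ (hP 0).isMatPoly (hP n).isMatPoly]

theorem exists_matIP_matPolyEval_succ_left (d : ℕ) (c : ℕ → Matrix (Fin N) (Fin N) ℂ)
    (n : ℕ) : ∃ c' : ℕ → Matrix (Fin N) (Fin N) ℂ,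
      matIP N W (matPolyEval (d + 1) c) (P n) =
        c (d + 1) * matIP N W (P (d + 1)) (P n) + matIP N W (matPolyEval d c') (P n) := by
  obtain ⟨p, hp, hPd⟩ := (hP (d + 1)).exists_eq_matPolyEval
  refine ⟨fun k => c k - c (d + 1) * p k, ?_⟩
  rw [funext (matPolyEval_succ_eq_mul_add (c := c) hp), ← hPd,
    matIP_add_left hWmeas hWmom (((hP _).isMatPoly).const_mul _) (isMatPoly_matPolyEval _ _)
      (hP n).isMatPoly,
    matIP_mul_left hWmeas hWmom _ (hP _).isMatPoly (hP n).isMatPoly]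

variable (hPorth : ∀ n m, n ≠ m → matIP N W (P n) (P m) = 0)
include hPorth

theorem matIP_matPolyEval_left_eq_zero :
    ∀ {d n : ℕ}, d < n → ∀ c : ℕ → Matrix (Fin N) (Fin N) ℂ,
      matIP N W (matPolyEval d c) (P n) = 0
  | 0, n, h, c => by
    rw [matIP_matPolyEval_zero_left hWmeas hWmom hP, hPorth 0 n h.ne, Matrix.mul_zero]
  | d + 1, n, h, c => by
    obtain ⟨c', hc'⟩ := exists_matIP_matPolyEval_succ_left hWmeas hWmom hP d c n
    rw [hc', hPorth _ n h.ne, Matrix.mul_zero, zero_add,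
      matIP_matPolyEval_left_eq_zero (Nat.lt_of_succ_lt h) c']

theorem matIP_matPolyEval_left_self (n : ℕ) (c : ℕ → Matrix (Fin N) (Fin N) ℂ) :
    matIP N W (matPolyEval n c) (P n) = c n * matIP N W (P n) (P n) := by
  cases n with
  | zero => exact matIP_matPolyEval_zero_left hWmeas hWmom hP c 0
  | succ d =>
    obtain ⟨c', hc'⟩ := exists_matIP_matPolyEval_succ_left hWmeas hWmom hP d c (d + 1)
    rw [hc', matIP_matPolyEval_left_eq_zero hWmeas hWmom hP hPorth d.lt_succ_self c', add_zero]

end MatrixWeight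

theorem zeroth_coefficient_identity_general
    (N : ℕ)
    (W : ℝ → Matrix (Fin N) (Fin N) ℂ)
    (hWmeas : ∀ i j : Fin N, Measurable fun x => W x i j)
    (hWpos : ∀ᵐ x : ℝ, (W x).PosDef)
    (hWmom : ∀ (m : ℕ) (i j : Fin N),
      Integrable fun x : ℝ => |x| ^ m * ‖W x i j‖)
    (P : ℕ → ℝ → Matrix (Fin N) (Fin N) ℂ)
    (hPmonic : ∀ n, IsMonicMatPoly N n (P n))
    (hPorth : ∀ n m, n ≠ m → matIP N W (P n) (P m) = 0)
    (hHpos : ∀ n, (matIP N W (P n) (P n)).PosDef)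
    (v : Polynomial ℝ)
    (A : Matrix (Fin N) (Fin N) ℂ)
    (hadj : ∀ R S : ℝ → Matrix (Fin N) (Fin N) ℂ, IsMatPoly N R → IsMatPoly N S →
      matInt N (fun y => (matDeriv N R y + R y * A) * W y * (S y)ᴴ) =
      matInt N (fun y => R y * W y *
        (-(matDeriv N S y) - S y * A + ((v.derivative.eval y : ℝ) : ℂ) • S y)ᴴ))
    :
    ∀ n : ℕ,
      vCoef N W v P n n =
        A + matIP N W (P n) (P n) * Aᴴ * (matIP N W (P n) (P n))⁻¹ := by
  intro n
  set H := matIP N W (P n) (P n)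
  obtain ⟨q, hqn, hQ⟩ := (hPmonic n).exists_matDeriv_add_mul_eq A
  have hQP : matIP N W (matPolyEval n q) (P n) = A * H := by
    rw [matIP_matPolyEval_left_self hWmeas hWmom hPmonic hPorth, hqn]
  have hPQ : matIP N W (P n) (matPolyEval n q) = H * Aᴴ := by
    rw [← conjTranspose_matIP (hWpos.mono fun _ hx => hx.isHermitian), hQP, conjTranspose_mul,
      (hHpos n).isHermitian.eq]
  have hadjn := hadj (P n) (P n) (hPmonic n).isMatPoly (hPmonic n).isMatPoly
  have hrhs : ∀ y,
      -(matDeriv N (P n) y) - P n y * A + ((v.derivative.eval y : ℝ) : ℂ) • P n y =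
        ((v.derivative.eval y : ℝ) : ℂ) • P n y - matPolyEval n q y := fun y => by
    rw [← hQ]
    abel
  simp only [hQ, hrhs] at hadjn
  change matIP N W (matPolyEval n q) (P n) = matIP N W (P n) (fun y => _ - _) at hadjn
  rw [matIP_polynomial_smul_sub_right hWmeas hWmom _ (hPmonic n).isMatPoly
    (hPmonic n).isMatPoly (isMatPoly_matPolyEval n q), hQP, hPQ] at hadjn
  have hvP : matIP N W (fun y => ((v.derivative.eval y : ℝ) : ℂ) • P n y) (P n) =
      A * H + H * Aᴴ :=
    sub_eq_iff_eq_add.mp hadjn.symm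
  have hH : H * H⁻¹ = 1 := mul_nonsing_inv H ((isUnit_iff_isUnit_det H).mp (hHpos n).isUnit)
  rw [vCoef, hvP, Matrix.add_mul, Matrix.mul_assoc A, hH, Matrix.mul_one]

/-- The zeroth coefficient of `v'(L)` equals `A + ℋ(n)A*ℋ(n)⁻¹` (eq. (3.4) of the paper). -/
theorem zeroth_coefficient_identity
    (N : ℕ) (hN : 1 ≤ N)
    (W : ℝ → Matrix (Fin N) (Fin N) ℂ)
    (hWmeas : ∀ i j : Fin N, Measurable fun x => W x i j)
    (hWpos : ∀ᵐ x : ℝ, (W x).PosDef)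
    (hWmom : ∀ (m : ℕ) (i j : Fin N),
      Integrable fun x : ℝ => |x| ^ m * ‖W x i j‖)
    (P : ℕ → ℝ → Matrix (Fin N) (Fin N) ℂ)
    (hPmonic : ∀ n, IsMonicMatPoly N n (P n))
    (hPorth : ∀ n m, n ≠ m → matIP N W (P n) (P m) = 0)
    (hHpos : ∀ n, (matIP N W (P n) (P n)).PosDef)
    (v : Polynomial ℝ) (k : ℕ) (hk : 2 ≤ k) (hdeg : v.natDegree = k)
    (A : Matrix (Fin N) (Fin N) ℂ)
    (hadj : ∀ R S : ℝ → Matrix (Fin N) (Fin N) ℂ, IsMatPoly N R → IsMatPoly N S →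
      matInt N (fun y => (matDeriv N R y + R y * A) * W y * (S y)ᴴ) =
      matInt N (fun y => R y * W y *
        (-(matDeriv N S y) - S y * A + ((v.derivative.eval y : ℝ) : ℂ) • S y)ᴴ))
    :
    ∀ n : ℕ,
      vCoef N W v P n n =
        A + matIP N W (P n) (P n) * Aᴴ * (matIP N W (P n) (P n))⁻¹ :=
  zeroth_coefficient_identity_general N W hWmeas hWpos hWmom P hPmonic hPorth hHpos v A hadj
end

section
/- With the special parameter choice 2α_j/α_{j−1} = √((j−1)(N−j+1)) for j = 2,…,N, the weight W(x) = e^{−x²}L(x)L(x)* satisfies the matrix Pearson equation W'(x) = −W(x)V(x) for all x ∈ ℝ, where V is the matrix polynomial of degree two given by −V(x) = (L(0)*)⁻¹ A L(0)* + A* + 2x(J + ½(A*)² − ((N+3)/2)I) − x² A*, with J = diag(1,2,…,N). -/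
open MeasureTheory Matrix Finset
open scoped ComplexOrder

/-- The physicists' Hermite polynomials, as functions on `ℝ`:
`H_0 = 1`, `H_1(x) = 2x`, `H_{m+1}(x) = 2x H_m(x) − 2m H_{m−1}(x)`. -/
noncomputable def hermiteF : ℕ → ℝ → ℝ
  | 0, _ => 1
  | 1, x => 2 * x
  | (m + 2), x => 2 * x * hermiteF (m + 1) x - 2 * (m + 1) * hermiteF m x

/-- The lower triangular matrix `L(x)` with entries
`L(x)_{jk} = (H_{j−k}(x)/(j−k)!)·(α_j/α_k)` for `j ≥ k` (here `0`-based indices). -/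
noncomputable def Lmat (N : ℕ) (α : Fin N → ℝ) (x : ℝ) : Matrix (Fin N) (Fin N) ℂ :=
  Matrix.of fun j k =>
    if (k : ℕ) ≤ (j : ℕ) then
      ((hermiteF ((j : ℕ) - (k : ℕ)) x / Nat.factorial ((j : ℕ) - (k : ℕ)) *
          (α j / α k) : ℝ) : ℂ)
    else 0

/-- The Hermite-type matrix weight `W(x) = e^{−x²} L(x)L(x)*`. -/
noncomputable def hermW (N : ℕ) (α : Fin N → ℝ) (x : ℝ) : Matrix (Fin N) (Fin N) ℂ :=
  Real.exp (-x ^ 2) • (Lmat N α x * (Lmat N α x)ᴴ)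

/-- The nilpotent shift matrix `A` with `A_{j,j−1} = 2α_j/α_{j−1}` (1-based), i.e.
(0-based) `A j k = 2 α_j / α_k` when `j = k + 1`. -/
noncomputable def Amat (N : ℕ) (α : Fin N → ℝ) : Matrix (Fin N) (Fin N) ℂ :=
  Matrix.of fun j k => if (j : ℕ) = (k : ℕ) + 1 then ((2 * α j / α k : ℝ) : ℂ) else 0

/-- The diagonal matrix `J = diag(1, 2, …, N)`. -/
def Jmat (N : ℕ) : Matrix (Fin N) (Fin N) ℂ :=
  Matrix.diagonal fun j => ((j : ℕ) + 1 : ℂ)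

/-!
`L(x)` and `A` are conjugates, by `diag α`, of lower triangular Toeplitz matrices with symbols
`e^{2xz - z²} = ∑ H_m(x) zᵐ/m!` and `2z`. Hence `L' = AL`, `AL = LA`, and the recursion
`H_{m+2}(0) = -2(m+1) H_m(0)` gives `A² L(0) = 2[L(0), J]`. For the special parameters
`[A, A*] = 2J - (N+1)`, and together these make `Q(x) = L(0)A*L(0)⁻¹ + 2xJ + xA² - (N+1)x - x²A`
satisfy the Lax equation `Q' = [A, Q]`. Then `Φ = L A* - Q L` solves `Φ' = AΦ` with `Φ(0) = 0`,
so `Φ = 0` because `A` is nilpotent (strictly lower triangular). Taking adjoints and using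
`AL = LA` gives `A L L* = L L* Q*`, whence `W' = e^{-x²}(-2x LL* + ALL* + LL*A*) = W(Q* + A* - 2x)`.
-/

open scoped Nat

lemma hermiteF_add_two (m : ℕ) (x : ℝ) :
    hermiteF (m + 2) x = 2 * x * hermiteF (m + 1) x - 2 * (m + 1) * hermiteF m x := rfl

lemma hasDerivAt_hermiteF_succ (m : ℕ) (x : ℝ) :
    HasDerivAt (hermiteF (m + 1)) (2 * (m + 1) * hermiteF m x) x := by
  have hid (x : ℝ) : HasDerivAt (fun y : ℝ => 2 * y) 2 x := by
    simpa using (hasDerivAt_id x).const_mul (2 : ℝ)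
  induction m using Nat.twoStepInduction generalizing x with
  | zero => simpa [hermiteF] using hid x
  | one =>
    have e : hermiteF 2 = fun y => 2 * y * (2 * y) - 2 := funext fun y => by simp [hermiteF]
    rw [e]
    exact (((hid x).fun_mul (hid x)).sub_const 2).congr_deriv (by simp only [Nat.cast_one, hermiteF]; ring)
  | more m ih₀ ih₁ =>
    have e : hermiteF (m + 2 + 1) = fun y =>
        2 * y * hermiteF (m + 1 + 1) y - 2 * ((m : ℝ) + 2) * hermiteF (m + 1) y :=
      funext fun y => by rw [hermiteF_add_two]; push_cast; ring
    rw [e]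
    refine (((hid x).fun_mul (ih₁ x)).fun_sub ((ih₀ x).const_mul _)).congr_deriv ?_
    rw [hermiteF_add_two]; push_cast; ring

lemma hermiteF_add_two_zero (m : ℕ) : hermiteF (m + 2) 0 = -(2 * (m + 1)) * hermiteF m 0 := by
  rw [hermiteF_add_two]; ring

/-- Matrices carry no norm instance here, so derivatives are taken entrywise, as in `matDeriv`. -/
def HasEntrywiseDerivAt {m n : Type*} (F : ℝ → Matrix m n ℂ) (F' : Matrix m n ℂ) (x : ℝ) :
    Prop :=
  ∀ i j, HasDerivAt (fun y => F y i j) (F' i j) x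

namespace HasEntrywiseDerivAt

variable {l m n : Type*} {F G : ℝ → Matrix m n ℂ} {F' G' : Matrix m n ℂ} {x : ℝ}

lemma const (M : Matrix m n ℂ) (x : ℝ) : HasEntrywiseDerivAt (fun _ => M) 0 x :=
  fun _ _ => hasDerivAt_const x _

lemma add (hF : HasEntrywiseDerivAt F F' x) (hG : HasEntrywiseDerivAt G G' x) :
    HasEntrywiseDerivAt (fun y => F y + G y) (F' + G') x :=
  fun i j => (hF i j).add (hG i j)

lemma sub (hF : HasEntrywiseDerivAt F F' x) (hG : HasEntrywiseDerivAt G G' x) :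
    HasEntrywiseDerivAt (fun y => F y - G y) (F' - G') x :=
  fun i j => (hF i j).sub (hG i j)

lemma smul {c : ℝ → ℂ} {c' : ℂ} (hc : HasDerivAt c c' x) (hF : HasEntrywiseDerivAt F F' x) :
    HasEntrywiseDerivAt (fun y => c y • F y) (c' • F x + c x • F') x :=
  fun i j => hc.fun_mul (hF i j)

lemma smul_const {c : ℝ → ℂ} {c' : ℂ} (hc : HasDerivAt c c' x) (M : Matrix m n ℂ) :
    HasEntrywiseDerivAt (fun y => c y • M) (c' • M) x :=
  fun i j => hc.mul_const (M i j)

lemma mul [Fintype l] {F : ℝ → Matrix m l ℂ} {G : ℝ → Matrix l n ℂ} {F' : Matrix m l ℂ}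
    {G' : Matrix l n ℂ} (hF : HasEntrywiseDerivAt F F' x) (hG : HasEntrywiseDerivAt G G' x) :
    HasEntrywiseDerivAt (fun y => F y * G y) (F' * G x + F x * G') x := fun i j => by
  simp only [Matrix.add_apply, Matrix.mul_apply, ← Finset.sum_add_distrib]
  exact HasDerivAt.fun_sum fun k _ => (hF i k).mul (hG k j)

lemma conjTranspose (hF : HasEntrywiseDerivAt F F' x) :
    HasEntrywiseDerivAt (fun y => (F y)ᴴ) F'ᴴ x :=
  fun i j => (hF j i).star

lemma matDeriv_eq {N : ℕ} {F : ℝ → Matrix (Fin N) (Fin N) ℂ} {F' : Matrix (Fin N) (Fin N) ℂ}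
    (hF : HasEntrywiseDerivAt F F' x) : matDeriv N F x = F' :=
  Matrix.ext fun i j => (hF i j).deriv

end HasEntrywiseDerivAt

/-- Row `i` of `F'` only involves the rows of `F` above it, so induct on rows. -/
theorem eq_zero_of_hasEntrywiseDerivAt_mul {m n : Type*} [Fintype m] [LinearOrder m]
    [WellFoundedLT m] {A : Matrix m m ℂ} (hA : ∀ i j, i ≤ j → A i j = 0)
    {F : ℝ → Matrix m n ℂ} (hF : ∀ x, HasEntrywiseDerivAt F (A * F x) x) (h0 : F 0 = 0)
    (x : ℝ) : F x = 0 := by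
  suffices ∀ i j y, F y i j = 0 from Matrix.ext fun i j => this i j x
  intro i
  induction i using WellFoundedLT.induction with
  | _ i ih =>
    intro j y
    have hrow : ∀ z, HasDerivAt (fun y => F y i j) 0 z := fun z => by
      convert hF z i j using 1
      rw [Matrix.mul_apply]
      refine (Finset.sum_eq_zero fun l _ => ?_).symm
      rcases lt_or_ge l i with hl | hl
      · rw [ih l hl j z, mul_zero]
      · rw [hA i l hl, zero_mul]
    have hconst := is_const_of_deriv_eq_zero (fun z => (hrow z).differentiableAt)
      (fun z => (hrow z).deriv) y 0
    rw [hconst, h0, Matrix.zero_apply]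

lemma hasEntrywiseDerivAt_mul_sub_mul {n : Type*} [Fintype n] {A C : Matrix n n ℂ}
    {L Q : ℝ → Matrix n n ℂ} {x : ℝ} (hL : HasEntrywiseDerivAt L (A * L x) x)
    (hQ : HasEntrywiseDerivAt Q (A * Q x - Q x * A) x) :
    HasEntrywiseDerivAt (fun y => L y * C - Q y * L y) (A * (L x * C - Q x * L x)) x := by
  convert (hL.mul (.const C x)).sub (hQ.mul hL) using 1
  simp only [mul_zero, add_zero, sub_mul, mul_sub, mul_assoc]
  abel

/-- The lower triangular Toeplitz matrix with symbol `t`, conjugated by `diag α`. -/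
noncomputable def scaledToeplitz {N : ℕ} (α : Fin N → ℝ) (t : ℕ → ℝ) :
    Matrix (Fin N) (Fin N) ℂ :=
  Matrix.of fun j k =>
    if (k : ℕ) ≤ (j : ℕ) then ((t ((j : ℕ) - (k : ℕ)) * (α j / α k) : ℝ) : ℂ) else 0

/-- Multiplying the symbol `∑ t m zᵐ` by `2z`: this is how `Amat` acts on `scaledToeplitz`. -/
def twoShift (t : ℕ → ℝ) : ℕ → ℝ
  | 0 => 0
  | m + 1 => 2 * t m

section ShiftMatrix

variable {N : ℕ} {α : Fin N → ℝ}

lemma Lmat_eq_scaledToeplitz (x : ℝ) :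
    Lmat N α x = scaledToeplitz α fun m => hermiteF m x / m ! := rfl

lemma Amat_mul_apply_of_eq_add_one (M : Matrix (Fin N) (Fin N) ℂ) {j l : Fin N}
    (h : (j : ℕ) = l + 1) (k : Fin N) :
    (Amat N α * M) j k = ((2 * α j / α l : ℝ) : ℂ) * M l k := by
  rw [Matrix.mul_apply, Finset.sum_eq_single l]
  · simp [Amat, h]
  · intro l' _ hl'
    simp [Amat, show (j : ℕ) ≠ l' + 1 from fun h' => hl' (Fin.ext (by omega))]
  · simp

lemma Amat_mul_apply_of_val_eq_zero (M : Matrix (Fin N) (Fin N) ℂ) {j : Fin N}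
    (h : (j : ℕ) = 0) (k : Fin N) : (Amat N α * M) j k = 0 := by
  rw [Matrix.mul_apply]
  exact Finset.sum_eq_zero fun l _ => by simp [Amat, h]

lemma mul_Amat_apply_of_eq_add_one (M : Matrix (Fin N) (Fin N) ℂ) {l k : Fin N}
    (h : (l : ℕ) = k + 1) (j : Fin N) :
    (M * Amat N α) j k = M j l * ((2 * α l / α k : ℝ) : ℂ) := by
  rw [Matrix.mul_apply, Finset.sum_eq_single l]
  · simp [Amat, h]
  · intro l' _ hl'
    simp [Amat, show (l' : ℕ) ≠ k + 1 from fun h' => hl' (Fin.ext (by omega))]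
  · simp

lemma mul_Amat_apply_of_add_one_eq (M : Matrix (Fin N) (Fin N) ℂ) {k : Fin N}
    (h : (k : ℕ) + 1 = N) (j : Fin N) : (M * Amat N α) j k = 0 := by
  rw [Matrix.mul_apply]
  exact Finset.sum_eq_zero fun l _ => by simp [Amat, show (l : ℕ) ≠ k + 1 by omega]

lemma Amat_apply_eq_zero_of_le {j k : Fin N} (h : j ≤ k) : Amat N α j k = 0 := by
  simp [Amat, show (j : ℕ) ≠ k + 1 by rw [Fin.le_def] at h; omega]

lemma exists_val_eq_add_one_of_ne_zero {j : Fin N} (h : (j : ℕ) ≠ 0) :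
    ∃ l : Fin N, (j : ℕ) = l + 1 :=
  ⟨⟨j - 1, by omega⟩, by simp; omega⟩

lemma Amat_mul_scaledToeplitz (hα : ∀ j, α j ≠ 0) (t : ℕ → ℝ) :
    Amat N α * scaledToeplitz α t = scaledToeplitz α (twoShift t) := by
  ext j k
  by_cases hj : (j : ℕ) = 0
  · rw [Amat_mul_apply_of_val_eq_zero _ hj]
    by_cases hk : (k : ℕ) = 0 <;> simp [scaledToeplitz, twoShift, hj, hk]
  obtain ⟨l, hl⟩ := exists_val_eq_add_one_of_ne_zero hj
  rw [Amat_mul_apply_of_eq_add_one _ hl]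
  simp only [scaledToeplitz, Matrix.of_apply]
  by_cases hkl : (k : ℕ) ≤ l
  · rw [if_pos hkl, if_pos (by omega), show (j : ℕ) - k = (l - k : ℕ) + 1 by omega, twoShift]
    have := hα l
    push_cast
    field_simp
  · rw [if_neg hkl, mul_zero]
    split_ifs with hkj
    · rw [show (j : ℕ) - k = 0 by omega, twoShift]; simp
    · rfl

lemma scaledToeplitz_mul_Amat (hα : ∀ j, α j ≠ 0) (t : ℕ → ℝ) :
    scaledToeplitz α t * Amat N α = scaledToeplitz α (twoShift t) := by
  ext j k
  by_cases hk : (k : ℕ) + 1 = N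
  · rw [mul_Amat_apply_of_add_one_eq _ hk]
    simp only [scaledToeplitz, Matrix.of_apply]
    split_ifs with hkj
    · rw [show (j : ℕ) - k = 0 by omega, twoShift]; simp
    · rfl
  obtain ⟨l, hl⟩ : ∃ l : Fin N, (l : ℕ) = k + 1 := ⟨⟨k + 1, by omega⟩, rfl⟩
  rw [mul_Amat_apply_of_eq_add_one _ hl]
  simp only [scaledToeplitz, Matrix.of_apply]
  by_cases hlj : (l : ℕ) ≤ j
  · rw [if_pos hlj, if_pos (by omega), show (j : ℕ) - k = (j - l : ℕ) + 1 by omega, twoShift]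
    have := hα l
    push_cast
    field_simp
  · rw [if_neg hlj, zero_mul]
    split_ifs with hkj
    · rw [show (j : ℕ) - k = 0 by omega, twoShift]; simp
    · rfl

lemma scaledToeplitz_mul_Jmat_sub (t : ℕ → ℝ) :
    scaledToeplitz α t * Jmat N - Jmat N * scaledToeplitz α t =
      scaledToeplitz α fun m => -m * t m := by
  ext j k
  simp only [Jmat, Matrix.sub_apply, Matrix.mul_diagonal, Matrix.diagonal_mul, scaledToeplitz,
    Matrix.of_apply]
  split_ifs with hkj
  · push_cast [hkj]; ring
  · simp

lemma det_scaledToeplitz (hα : ∀ j, α j ≠ 0) (t : ℕ → ℝ) :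
    (scaledToeplitz α t).det = (t 0 : ℂ) ^ N := by
  have hlower : (scaledToeplitz α t).IsLowerTriangular := fun j k hjk => by
    simp [scaledToeplitz, not_le.mpr (OrderDual.toDual_lt_toDual.mp hjk)]
  rw [Matrix.det_of_isLowerTriangular _ hlower]
  simp [scaledToeplitz, hα]

end ShiftMatrix

lemma hasDerivAt_hermiteF_div_factorial (m : ℕ) (x : ℝ) :
    HasDerivAt (fun y => hermiteF m y / m !) (twoShift (fun m => hermiteF m x / m !) m) x := by
  cases m with
  | zero => simpa [hermiteF, twoShift] using hasDerivAt_const x (1 : ℝ)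
  | succ m =>
    refine ((hasDerivAt_hermiteF_succ m x).div_const _).congr_deriv ?_
    rw [twoShift, Nat.factorial_succ]
    push_cast
    field_simp

lemma twoShift_twoShift_hermiteF_zero :
    twoShift (twoShift fun m => hermiteF m 0 / m !) = fun m => -(2 * m) * (hermiteF m 0 / m !) := by
  funext m
  match m with
  | 0 => simp [twoShift]
  | 1 => simp [twoShift, hermiteF]
  | m + 2 =>
    rw [twoShift, twoShift, hermiteF_add_two_zero, Nat.factorial_succ, Nat.factorial_succ]
    push_cast
    field_simp
    ring

lemma hasEntrywiseDerivAt_scaledToeplitz {N : ℕ} (α : Fin N → ℝ) {t : ℝ → ℕ → ℝ}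
    {t' : ℕ → ℝ} {x : ℝ} (ht : ∀ m, HasDerivAt (fun y => t y m) (t' m) x) :
    HasEntrywiseDerivAt (fun y => scaledToeplitz α (t y)) (scaledToeplitz α t') x := by
  intro j k
  simp only [scaledToeplitz, Matrix.of_apply]
  split_ifs
  · exact ((ht _).mul_const _).ofReal_comp
  · exact hasDerivAt_const x _

section HermiteWeight

variable {N : ℕ} {α : Fin N → ℝ}

lemma hasEntrywiseDerivAt_Lmat (hα : ∀ j, α j ≠ 0) (x : ℝ) :
    HasEntrywiseDerivAt (Lmat N α) (Amat N α * Lmat N α x) x := by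
  rw [Lmat_eq_scaledToeplitz, Amat_mul_scaledToeplitz hα]
  exact hasEntrywiseDerivAt_scaledToeplitz α (hasDerivAt_hermiteF_div_factorial · x)

lemma Amat_mul_Lmat_comm (hα : ∀ j, α j ≠ 0) (x : ℝ) :
    Amat N α * Lmat N α x = Lmat N α x * Amat N α := by
  rw [Lmat_eq_scaledToeplitz, Amat_mul_scaledToeplitz hα, scaledToeplitz_mul_Amat hα]

lemma Amat_mul_Amat_mul_Lmat_zero (hα : ∀ j, α j ≠ 0) :
    Amat N α * (Amat N α * Lmat N α 0) =
      (2 : ℂ) • (Lmat N α 0 * Jmat N - Jmat N * Lmat N α 0) := by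
  rw [Lmat_eq_scaledToeplitz, Amat_mul_scaledToeplitz hα, Amat_mul_scaledToeplitz hα,
    scaledToeplitz_mul_Jmat_sub, twoShift_twoShift_hermiteF_zero]
  ext j k
  simp only [scaledToeplitz, Matrix.smul_apply, Matrix.of_apply, smul_eq_mul]
  split_ifs <;> push_cast <;> ring

lemma isUnit_det_Lmat (hα : ∀ j, α j ≠ 0) (x : ℝ) : IsUnit (Lmat N α x).det := by
  simp [Lmat_eq_scaledToeplitz, det_scaledToeplitz hα, hermiteF]

lemma Jmat_mul_Amat : Jmat N * Amat N α = Amat N α * Jmat N + Amat N α := by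
  ext j k
  simp only [Jmat, Matrix.add_apply, Matrix.mul_diagonal, Matrix.diagonal_mul, Amat,
    Matrix.of_apply]
  split_ifs with h
  · push_cast [h]; ring
  · simp

end HermiteWeight

/-- The special choice `2 α_j / α_{j-1} = √((j-1)(N-j+1))` (1-based) of the parameters. -/
def HasSpecialParameters {N : ℕ} (α : Fin N → ℝ) : Prop :=
  ∀ j k : Fin N, (j : ℕ) = (k : ℕ) + 1 → 2 * α j / α k = Real.sqrt ((j : ℕ) * (N - (j : ℕ)))

section SpecialParameters

variable {N : ℕ} {α : Fin N → ℝ}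

lemma HasSpecialParameters.mul_self_eq (hspec : HasSpecialParameters α) {j l : Fin N}
    (h : (j : ℕ) = l + 1) : ((2 * α j / α l : ℝ) : ℂ) * ((2 * α j / α l : ℝ) : ℂ) =
      (j : ℕ) * (N - (j : ℕ)) := by
  have hj : ((j : ℕ) : ℝ) ≤ N := by exact_mod_cast j.isLt.le
  rw [← Complex.ofReal_mul, hspec j l h, Real.mul_self_sqrt (by nlinarith)]
  push_cast
  ring

lemma Amat_mul_conjTranspose_Amat (hspec : HasSpecialParameters α) :
    Amat N α * (Amat N α)ᴴ = Matrix.diagonal fun j : Fin N => ((j : ℕ) * (N - (j : ℕ)) : ℂ) := by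
  ext j k
  by_cases hj : (j : ℕ) = 0
  · rw [Amat_mul_apply_of_val_eq_zero _ hj]
    simp [Matrix.diagonal_apply, hj]
  obtain ⟨l, hl⟩ := exists_val_eq_add_one_of_ne_zero hj
  rw [Amat_mul_apply_of_eq_add_one _ hl, Matrix.conjTranspose_apply]
  by_cases hjk : j = k
  · subst hjk
    simp only [Amat, Matrix.of_apply, if_pos hl, Complex.star_def, Complex.conj_ofReal,
      Matrix.diagonal_apply_eq]
    exact hspec.mul_self_eq hl
  · simp [Amat, Matrix.diagonal_apply_ne _ hjk,
      show (k : ℕ) ≠ l + 1 from fun h => hjk (Fin.ext (by omega))]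

lemma conjTranspose_Amat_mul_Amat (hspec : HasSpecialParameters α) :
    (Amat N α)ᴴ * Amat N α =
      Matrix.diagonal fun j : Fin N => (((j : ℕ) + 1) * (N - ((j : ℕ) + 1)) : ℂ) := by
  ext j k
  by_cases hk : (k : ℕ) + 1 = N
  · rw [mul_Amat_apply_of_add_one_eq _ hk]
    by_cases hjk : j = k
    · subst hjk; simp [← hk]
    · simp [Matrix.diagonal_apply_ne _ hjk]
  obtain ⟨l, hl⟩ : ∃ l : Fin N, (l : ℕ) = k + 1 := ⟨⟨k + 1, by omega⟩, rfl⟩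
  rw [mul_Amat_apply_of_eq_add_one _ hl, Matrix.conjTranspose_apply]
  by_cases hjk : j = k
  · subst hjk
    simp only [Amat, Matrix.of_apply, if_pos hl, Complex.star_def, Complex.conj_ofReal,
      Matrix.diagonal_apply_eq]
    rw [hspec.mul_self_eq hl, hl]
    push_cast
    ring
  · simp [Amat, Matrix.diagonal_apply_ne _ hjk,
      show (l : ℕ) ≠ j + 1 from fun h => hjk (Fin.ext (by omega))]

lemma Amat_mul_conjTranspose_sub (hspec : HasSpecialParameters α) :
    Amat N α * (Amat N α)ᴴ - (Amat N α)ᴴ * Amat N α =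
      (2 : ℂ) • Jmat N - ((N : ℂ) + 1) • 1 := by
  rw [Amat_mul_conjTranspose_Amat hspec, conjTranspose_Amat_mul_Amat hspec]
  ext j k
  by_cases hjk : j = k
  · subst hjk
    simp only [Matrix.sub_apply, Matrix.diagonal_apply_eq, Jmat, Matrix.smul_apply, smul_eq_mul,
      Matrix.one_apply_eq, mul_one]
    ring
  · simp [Jmat, Matrix.diagonal_apply_ne _ hjk, Matrix.one_apply_ne hjk]

end SpecialParameters

/-- The matrix polynomial with `L(x) A* = Q(x) L(x)`; the Pearson matrix `-V(x)` is
`Q(x)* + A* - 2x`. -/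
noncomputable def Qmat (N : ℕ) (α : Fin N → ℝ) (x : ℝ) : Matrix (Fin N) (Fin N) ℂ :=
  Lmat N α 0 * (Amat N α)ᴴ * (Lmat N α 0)⁻¹ + (2 * x : ℂ) • Jmat N +
    (x : ℂ) • (Amat N α * Amat N α) - (((N : ℂ) + 1) * x) • 1 - (x : ℂ) ^ 2 • Amat N α

section Pearson

variable {N : ℕ} {α : Fin N → ℝ}

lemma Amat_mul_conj_sub_conj_mul_Amat (hα : ∀ j, α j ≠ 0) (hspec : HasSpecialParameters α) :
    Amat N α * (Lmat N α 0 * (Amat N α)ᴴ * (Lmat N α 0)⁻¹) -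
        Lmat N α 0 * (Amat N α)ᴴ * (Lmat N α 0)⁻¹ * Amat N α =
      (2 : ℂ) • Jmat N + Amat N α * Amat N α - ((N : ℂ) + 1) • 1 := by
  set A := Amat N α
  set L₀ := Lmat N α 0
  have := L₀.invertibleOfIsUnitDet (isUnit_det_Lmat hα 0)
  have hAL₀ : A * L₀ = L₀ * A := Amat_mul_Lmat_comm hα 0
  have hAL₀inv : L₀⁻¹ * A = A * L₀⁻¹ := by
    rw [Matrix.inv_mul_eq_iff_eq_mul_of_invertible, ← mul_assoc, ← hAL₀, mul_assoc,
      Matrix.mul_inv_of_invertible, mul_one]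
  have hAA : A * A = (2 : ℂ) • (L₀ * Jmat N * L₀⁻¹ - Jmat N) := by
    rw [← Matrix.mul_inv_cancel_right_of_invertible (A := L₀) (A * A), mul_assoc A,
      Amat_mul_Amat_mul_Lmat_zero hα, smul_mul_assoc, sub_mul,
      Matrix.mul_inv_cancel_right_of_invertible]
  calc A * (L₀ * Aᴴ * L₀⁻¹) - L₀ * Aᴴ * L₀⁻¹ * A = L₀ * (A * Aᴴ - Aᴴ * A) * L₀⁻¹ := by
        rw [mul_sub, sub_mul]
        simp only [← mul_assoc, hAL₀]
        simp only [mul_assoc, hAL₀inv]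
    _ = (2 : ℂ) • (L₀ * Jmat N * L₀⁻¹) - ((N : ℂ) + 1) • 1 := by
        rw [Amat_mul_conjTranspose_sub hspec]
        simp only [mul_sub, sub_mul, mul_smul_comm, smul_mul_assoc, mul_one, mul_assoc,
          Matrix.mul_inv_of_invertible]
    _ = _ := by rw [hAA]; module

lemma hasEntrywiseDerivAt_Qmat (hα : ∀ j, α j ≠ 0) (hspec : HasSpecialParameters α) (x : ℝ) :
    HasEntrywiseDerivAt (Qmat N α) (Amat N α * Qmat N α x - Qmat N α x * Amat N α) x := by
  set A := Amat N α
  set B := Lmat N α 0 * Aᴴ * (Lmat N α 0)⁻¹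
  have hQ : Qmat N α = fun y : ℝ => B + (2 * y : ℂ) • Jmat N + (y : ℂ) • (A * A) -
      (((N : ℂ) + 1) * y) • 1 - (y : ℂ) ^ 2 • A := rfl
  have hx : HasDerivAt (fun y : ℝ => (y : ℂ)) 1 x := (hasDerivAt_id x).ofReal_comp
  have hAB : A * B = B * A + ((2 : ℂ) • Jmat N + A * A - ((N : ℂ) + 1) • 1) := by
    rw [← Amat_mul_conj_sub_conj_mul_Amat hα hspec]; abel
  have hJA : Jmat N * A = A * Jmat N + A := Jmat_mul_Amat
  rw [hQ]
  convert ((((HasEntrywiseDerivAt.const B x).add (.smul_const (hx.const_mul 2) (Jmat N))).add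
    (.smul_const hx (A * A))).sub (.smul_const (hx.const_mul ((N : ℂ) + 1)) 1)).sub
    (.smul_const (hx.pow 2) A) using 1
  · rfl
  simp only [mul_add, add_mul, mul_sub, sub_mul, mul_smul_comm, smul_mul_assoc, mul_one,
    one_mul, mul_assoc, hAB, hJA]
  module

lemma Lmat_mul_conjTranspose_Amat (hα : ∀ j, α j ≠ 0) (hspec : HasSpecialParameters α)
    (x : ℝ) : Lmat N α x * (Amat N α)ᴴ = Qmat N α x * Lmat N α x := by
  have hzero := eq_zero_of_hasEntrywiseDerivAt_mul (fun _ _ => Amat_apply_eq_zero_of_le)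
    (fun y => hasEntrywiseDerivAt_mul_sub_mul (C := (Amat N α)ᴴ) (hasEntrywiseDerivAt_Lmat hα y)
      (hasEntrywiseDerivAt_Qmat hα hspec y)) ?_ x
  · exact sub_eq_zero.mp hzero
  · have := (Lmat N α 0).invertibleOfIsUnitDet (isUnit_det_Lmat hα 0)
    simp [Qmat, Matrix.inv_mul_cancel_right_of_invertible]

lemma conjTranspose_Qmat (x : ℝ) :
    (Qmat N α x)ᴴ = ((Lmat N α 0)ᴴ)⁻¹ * Amat N α * (Lmat N α 0)ᴴ + (2 * x : ℂ) • Jmat N +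
      (x : ℂ) • ((Amat N α)ᴴ * (Amat N α)ᴴ) - (((N : ℂ) + 1) * x) • 1 -
      (x : ℂ) ^ 2 • (Amat N α)ᴴ := by
  simp [Qmat, Matrix.conjTranspose_nonsing_inv, Jmat, Matrix.mul_assoc, Pi.star_def]

lemma hermW_eq_complex_smul (x : ℝ) :
    hermW N α x = (Real.exp (-x ^ 2) : ℂ) • (Lmat N α x * (Lmat N α x)ᴴ) := by
  ext i j
  simp [hermW, Complex.real_smul]

lemma hasEntrywiseDerivAt_hermW (hα : ∀ j, α j ≠ 0) (x : ℝ) :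
    HasEntrywiseDerivAt (hermW N α) ((Real.exp (-x ^ 2) : ℂ) •
      (-(2 * x : ℂ) • (Lmat N α x * (Lmat N α x)ᴴ) + Amat N α * (Lmat N α x * (Lmat N α x)ᴴ) +
        Lmat N α x * (Lmat N α x)ᴴ * (Amat N α)ᴴ)) x := by
  have he : HasDerivAt (fun y : ℝ => (Real.exp (-y ^ 2) : ℂ))
      ((-(2 * x) * Real.exp (-x ^ 2) : ℝ) : ℂ) x := by
    refine (((hasDerivAt_pow 2 x).fun_neg.exp).congr_deriv ?_).ofReal_comp
    ring
  have hL := hasEntrywiseDerivAt_Lmat hα x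
  rw [funext (hermW_eq_complex_smul (α := α))]
  convert HasEntrywiseDerivAt.smul he (hL.mul hL.conjTranspose) using 1
  simp only [Matrix.conjTranspose_mul, mul_assoc]
  push_cast
  module

lemma Amat_mul_Lmat_mul_conjTranspose (hα : ∀ j, α j ≠ 0) (hspec : HasSpecialParameters α)
    (x : ℝ) :
    Amat N α * (Lmat N α x * (Lmat N α x)ᴴ) = Lmat N α x * (Lmat N α x)ᴴ * (Qmat N α x)ᴴ := by
  have hstar : Amat N α * (Lmat N α x)ᴴ = (Lmat N α x * (Amat N α)ᴴ)ᴴ := by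
    rw [Matrix.conjTranspose_mul, Matrix.conjTranspose_conjTranspose]
  rw [← mul_assoc, Amat_mul_Lmat_comm hα, mul_assoc, hstar, Lmat_mul_conjTranspose_Amat hα hspec,
    Matrix.conjTranspose_mul, mul_assoc]

end Pearson

theorem hermite_pearson_equation_general
    (N : ℕ) (α : Fin N → ℝ) (hα : ∀ j, 0 < α j)
    (hspec : ∀ j k : Fin N, (j : ℕ) = (k : ℕ) + 1 →
      2 * α j / α k = Real.sqrt ((j : ℕ) * (N - (j : ℕ))))
    :
    ∀ x : ℝ,
      matDeriv N (hermW N α) x =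
        hermW N α x *
          (((Lmat N α 0)ᴴ)⁻¹ * Amat N α * (Lmat N α 0)ᴴ + (Amat N α)ᴴ +
            ((2 * x : ℝ) : ℂ) •
              (Jmat N + (1 / 2 : ℂ) • ((Amat N α)ᴴ * (Amat N α)ᴴ) -
                (((N : ℂ) + 3) / 2) • (1 : Matrix (Fin N) (Fin N) ℂ)) -
            ((x ^ 2 : ℝ) : ℂ) • (Amat N α)ᴴ) := by
  intro x
  have hα' : ∀ j, α j ≠ 0 := fun j => (hα j).ne'
  rw [(hasEntrywiseDerivAt_hermW hα' x).matDeriv_eq, Amat_mul_Lmat_mul_conjTranspose hα' hspec,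
    conjTranspose_Qmat, hermW_eq_complex_smul, smul_mul_assoc]
  congr 1
  simp only [mul_add, mul_sub, mul_smul_comm, mul_one, mul_assoc]
  push_cast
  module

/-- **Matrix Pearson equation for the Hermite-type weight with special parameters**
(Proposition 6.2 of the paper): with `2α_j/α_{j−1} = √((j−1)(N−j+1))`, the weight
`W(x) = e^{−x²}L(x)L(x)*` satisfies `W'(x) = −W(x)V(x)` with
`−V(x) = (L(0)*)⁻¹AL(0)* + A* + 2x(J + ½(A*)² − (N+3)/2) − x²A*`. -/
theorem hermite_pearson_equation
    (N : ℕ) (hN : 1 ≤ N) (α : Fin N → ℝ) (hα : ∀ j, 0 < α j)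
    (hspec : ∀ j k : Fin N, (j : ℕ) = (k : ℕ) + 1 →
      2 * α j / α k = Real.sqrt ((j : ℕ) * (N - (j : ℕ))))
    :
    ∀ x : ℝ,
      matDeriv N (hermW N α) x =
        hermW N α x *
          (((Lmat N α 0)ᴴ)⁻¹ * Amat N α * (Lmat N α 0)ᴴ + (Amat N α)ᴴ +
            ((2 * x : ℝ) : ℂ) •
              (Jmat N + (1 / 2 : ℂ) • ((Amat N α)ᴴ * (Amat N α)ᴴ) -
                (((N : ℂ) + 3) / 2) • (1 : Matrix (Fin N) (Fin N) ℂ)) -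
            ((x ^ 2 : ℝ) : ℂ) • (Amat N α)ᴴ) :=
  hermite_pearson_equation_general N α hα hspec
end
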